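/- arXiv:math/9907114 — 3 statements merged into one kernel-verified Lean document; each statement's English description precedes it below -/
import Mathlib

section
/- For all a, b ∈ M₂(ℂ), the ℂ-linear map m_{a,b} : W → W is bijective if and only if det a ≠ det b; equivalently, m_{a,b} has nonzero kernel exactly when (a,b) is isotropic for the quadratic form q. -/
open Matrix

/-- `M2` is the algebra of 2×2 complex matrices. -/
abbrev M2 : Type := Matrix (Fin 2) (Fin 2) ℂ

lemma adjugate_add (x y : M2) : (x + y).adjugate = x.adjugate + y.adjugate := by
  rw [Matrix.adjugate_fin_two, Matrix.adjugate_fin_two, Matrix.adjugate_fin_two]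
  ext i j
  fin_cases i <;> fin_cases j <;> simp [Matrix.add_apply] <;> ring

lemma adjugate_csmul (c : ℂ) (x : M2) : (c • x).adjugate = c • x.adjugate := by
  rw [Matrix.adjugate_fin_two, Matrix.adjugate_fin_two]
  ext i j
  fin_cases i <;> fin_cases j <;> simp [Matrix.smul_apply]

/-- Clifford multiplication by the vector `(a, b) ∈ W = M₂(ℂ) × M₂(ℂ)`, viewed as a
`ℂ`-linear map `S⁺ → S⁻`, both half-spinor spaces being identified with `W`:
`m_{a,b}(x, y) = (adj(a)·adj(x) + adj(y)·b, b·x + y·adj(a))`. -/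
noncomputable def cliffordMul (a b : M2) : (M2 × M2) →ₗ[ℂ] (M2 × M2) where
  toFun p := (a.adjugate * p.1.adjugate + p.2.adjugate * b, b * p.1 + p.2 * a.adjugate)
  map_add' := by
    intro p q
    simp only [adjugate_add, mul_add, add_mul, Prod.fst_add, Prod.snd_add, Prod.mk_add_mk]
    refine Prod.ext ?_ ?_ <;> dsimp <;> abel
  map_smul' := by
    intro c p
    simp [adjugate_csmul, Matrix.mul_smul, Matrix.smul_mul, smul_add]

/-- The "reverse" Clifford multiplication `G(u,v) = (adj(u)·adj(a) − adj(b)·v, v·a − b·adj(u))`,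
satisfying `G ∘ m_{a,b} = m_{a,b} ∘ G = (det a − det b) • id`. -/
noncomputable def cliffordRev (a b : M2) (p : M2 × M2) : M2 × M2 :=
  (p.1.adjugate * a.adjugate - b.adjugate * p.2, p.2 * a - b * p.1.adjugate)

lemma key1 (a b x y : M2) :
    (a.adjugate * x.adjugate + y.adjugate * b).adjugate * a.adjugate
      - b.adjugate * (b * x + y * a.adjugate) = (a.det - b.det) • x := by
  ext i j
  fin_cases i <;> fin_cases j <;>
    simp [adjugate_fin_two, det_fin_two, mul_apply, Fin.sum_univ_two, Matrix.sub_apply,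
      Matrix.add_apply, Matrix.smul_apply, smul_eq_mul, Matrix.vecMul, Matrix.vecHead,
      Matrix.vecTail, dotProduct] <;> ring

lemma key2 (a b x y : M2) :
    (b * x + y * a.adjugate) * a
      - b * (a.adjugate * x.adjugate + y.adjugate * b).adjugate = (a.det - b.det) • y := by
  ext i j
  fin_cases i <;> fin_cases j <;>
    simp [adjugate_fin_two, det_fin_two, mul_apply, Fin.sum_univ_two, Matrix.sub_apply,
      Matrix.add_apply, Matrix.smul_apply, smul_eq_mul, Matrix.vecMul, Matrix.vecHead,
      Matrix.vecTail, dotProduct] <;> ring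

lemma key3 (a b u v : M2) :
    a.adjugate * (u.adjugate * a.adjugate - b.adjugate * v).adjugate
      + (v * a - b * u.adjugate).adjugate * b = (a.det - b.det) • u := by
  ext i j
  fin_cases i <;> fin_cases j <;>
    simp [adjugate_fin_two, det_fin_two, mul_apply, Fin.sum_univ_two, Matrix.sub_apply,
      Matrix.add_apply, Matrix.smul_apply, smul_eq_mul, Matrix.vecMul, Matrix.vecHead,
      Matrix.vecTail, dotProduct] <;> ring

lemma key4 (a b u v : M2) :
    b * (u.adjugate * a.adjugate - b.adjugate * v)
      + (v * a - b * u.adjugate) * a.adjugate = (a.det - b.det) • v := by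
  ext i j
  fin_cases i <;> fin_cases j <;>
    simp [adjugate_fin_two, det_fin_two, mul_apply, Fin.sum_univ_two, Matrix.sub_apply,
      Matrix.add_apply, Matrix.smul_apply, smul_eq_mul, Matrix.vecMul, Matrix.vecHead,
      Matrix.vecTail, dotProduct] <;> ring

lemma rev_comp (a b : M2) (p : M2 × M2) :
    cliffordRev a b (cliffordMul a b p) = (a.det - b.det) • p := by
  obtain ⟨x, y⟩ := p
  simp only [cliffordMul, cliffordRev, LinearMap.coe_mk, AddHom.coe_mk, Prod.smul_mk]
  exact Prod.ext (key1 a b x y) (key2 a b x y)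

lemma comp_rev (a b : M2) (p : M2 × M2) :
    cliffordMul a b (cliffordRev a b p) = (a.det - b.det) • p := by
  obtain ⟨u, v⟩ := p
  simp only [cliffordMul, cliffordRev, LinearMap.coe_mk, AddHom.coe_mk, Prod.smul_mk]
  exact Prod.ext (key3 a b u v) (key4 a b u v)

lemma adjugate_eq_zero_iff (a : M2) : a.adjugate = 0 ↔ a = 0 := by
  constructor
  · intro h
    have := congrArg Matrix.adjugate h
    rw [Matrix.adjugate_adjugate', Matrix.adjugate_zero] at this
    simpa using this
  · rintro rfl; exact Matrix.adjugate_zero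

/-- Clifford multiplication `m_{a,b}` is bijective iff `det a ≠ det b`; equivalently it
has nonzero kernel exactly when `(a, b)` is isotropic for `q(x,y) = det x − det y`. -/
theorem cliffordMul_bijective_iff (a b : M2) :
    (Function.Bijective (cliffordMul a b) ↔ a.det ≠ b.det) ∧
      (LinearMap.ker (cliffordMul a b) ≠ ⊥ ↔ a.det = b.det) := by
  set c : ℂ := a.det - b.det with hc
  have main : a.det = b.det → LinearMap.ker (cliffordMul a b) ≠ ⊥ := by
    intro hdet hker
    have hc0 : c = 0 := by rw [hc, hdet, sub_self]
    have hinj : Function.Injective (cliffordMul a b) := by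
      rw [← LinearMap.ker_eq_bot]; exact hker
    have hsurj : Function.Surjective (cliffordMul a b) :=
      (LinearMap.injective_iff_surjective).mp hinj
    have hG : ∀ w : M2 × M2, cliffordRev a b w = 0 := by
      intro w
      obtain ⟨p, rfl⟩ := hsurj w
      rw [rev_comp, ← hc, hc0, zero_smul]
    have h1 := hG (1, 0)
    simp only [cliffordRev, Matrix.adjugate_one, one_mul, mul_zero, sub_zero,
      zero_mul, mul_one, zero_sub] at h1
    have ha : a.adjugate = 0 := congrArg Prod.fst h1
    have hb : -b = 0 := congrArg Prod.snd h1
    have ha' : a = 0 := (adjugate_eq_zero_iff a).mp ha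
    have hb' : b = 0 := neg_eq_zero.mp hb
    -- then cliffordMul a b = 0, so (1,0) is in the kernel, contradicting ker = ⊥
    have : ((1 : M2), (0 : M2)) ∈ LinearMap.ker (cliffordMul a b) := by
      rw [LinearMap.mem_ker]
      simp [cliffordMul, ha', hb']
    rw [hker, Submodule.mem_bot] at this
    have h2 := congrArg Prod.fst this
    simp at h2
  have bij : a.det ≠ b.det → Function.Bijective (cliffordMul a b) := by
    intro hdet
    have hc0 : c ≠ 0 := sub_ne_zero.mpr hdet
    constructor
    · intro p q h
      have h1 := rev_comp a b p
      have h2 := rev_comp a b q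
      rw [← hc] at h1 h2
      rw [h] at h1
      rw [h1] at h2
      exact (smul_right_injective _ hc0 h2)
    · intro w
      refine ⟨c⁻¹ • cliffordRev a b w, ?_⟩
      rw [LinearMap.map_smul, comp_rev, ← hc, smul_smul, inv_mul_cancel₀ hc0, one_smul]
  constructor
  · constructor
    · intro hbij hdet
      have hker : LinearMap.ker (cliffordMul a b) = ⊥ :=
        LinearMap.ker_eq_bot.mpr hbij.injective
      exact main hdet hker
    · exact bij
  · constructor
    · intro hker
      by_contra hdet
      exact hker (LinearMap.ker_eq_bot.mpr (bij hdet).injective)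
    · exact main
end

section
/- For all a, b ∈ M₂(ℂ) with det a = det b and (a,b) ≠ (0,0), the kernel of the ℂ-linear map m_{a,b} : W → W has complex dimension exactly 4 (equivalently, m_{a,b} has rank 4). -/
open Matrix

@[simp] lemma cliffordMul_apply (a b : M2) (p : M2 × M2) :
    cliffordMul a b p
      = (a.adjugate * p.1.adjugate + p.2.adjugate * b, b * p.1 + p.2 * a.adjugate) := rfl

/-- The "adjoint" Clifford multiplication `S⁻ → S⁺`. -/
noncomputable def gMul (a b : M2) : (M2 × M2) →ₗ[ℂ] (M2 × M2) where
  toFun p := (p.1.adjugate * a.adjugate - b.adjugate * p.2, p.2 * a - b * p.1.adjugate)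
  map_add' := by
    intro p q
    simp only [adjugate_add, mul_add, add_mul, Prod.fst_add, Prod.snd_add, Prod.mk_add_mk]
    refine Prod.ext ?_ ?_ <;> dsimp <;> abel
  map_smul' := by
    intro c p
    simp [adjugate_csmul, Matrix.mul_smul, Matrix.smul_mul, smul_sub]

@[simp] lemma gMul_apply (a b : M2) (p : M2 × M2) :
    gMul a b p
      = (p.1.adjugate * a.adjugate - b.adjugate * p.2, p.2 * a - b * p.1.adjugate) := rfl

lemma adjugate_adjugate2 (x : M2) : x.adjugate.adjugate = x := by
  rw [Matrix.adjugate_fin_two, Matrix.adjugate_fin_two]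
  ext i j
  fin_cases i <;> fin_cases j <;> simp

@[simp] lemma adjugate_apply00 (M : M2) : M.adjugate 0 0 = M 1 1 := by
  simp [Matrix.adjugate_fin_two]
@[simp] lemma adjugate_apply01 (M : M2) : M.adjugate 0 1 = -M 0 1 := by
  simp [Matrix.adjugate_fin_two]
@[simp] lemma adjugate_apply10 (M : M2) : M.adjugate 1 0 = -M 1 0 := by
  simp [Matrix.adjugate_fin_two]
@[simp] lemma adjugate_apply11 (M : M2) : M.adjugate 1 1 = M 0 0 := by
  simp [Matrix.adjugate_fin_two]

lemma mul_gMul (a b : M2) (p : M2 × M2) :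
    cliffordMul a b (gMul a b p) = (a.det - b.det) • p := by
  obtain ⟨x, y⟩ := p
  refine Prod.ext ?_ ?_ <;> ext i j <;> fin_cases i <;> fin_cases j <;>
    simp only [cliffordMul_apply, gMul_apply, Matrix.add_apply, Matrix.sub_apply,
      Matrix.mul_apply, Fin.sum_univ_two, adjugate_apply00, adjugate_apply01,
      adjugate_apply10, adjugate_apply11, Matrix.det_fin_two, Prod.smul_fst,
      Prod.smul_snd, Matrix.smul_apply, smul_eq_mul, Matrix.neg_apply, Fin.isValue, Fin.mk_zero, Fin.mk_one] <;> ring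

lemma mixed_identity (a b c d : M2) (p : M2 × M2) :
    gMul a b (cliffordMul c d p) + gMul c d (cliffordMul a b p)
      = (Matrix.trace (a.adjugate * c) - Matrix.trace (b.adjugate * d)) • p := by
  obtain ⟨x, y⟩ := p
  refine Prod.ext ?_ ?_ <;> ext i j <;> fin_cases i <;> fin_cases j <;>
    simp only [cliffordMul_apply, gMul_apply, Prod.fst_add, Prod.snd_add, Matrix.add_apply,
      Matrix.sub_apply, Matrix.mul_apply, Fin.sum_univ_two, adjugate_apply00, adjugate_apply01,
      adjugate_apply10, adjugate_apply11, Matrix.trace_fin_two, Prod.smul_fst,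
      Prod.smul_snd, Matrix.smul_apply, smul_eq_mul, Matrix.neg_apply, Fin.isValue, Fin.mk_zero, Fin.mk_one] <;> ring

/-- The invariant pairing on `W`. -/
noncomputable def pairB (q p : M2 × M2) : ℂ :=
  Matrix.trace (q.2 * p.2.adjugate) - Matrix.trace (q.1 * p.1.adjugate)

lemma adjoint_identity (a b : M2) (q p : M2 × M2) :
    pairB (gMul a b q) p = pairB q (cliffordMul a b p) := by
  obtain ⟨x, y⟩ := p
  obtain ⟨u, v⟩ := q
  simp only [pairB, gMul_apply, cliffordMul_apply, Matrix.trace_fin_two, Matrix.mul_apply,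
    Fin.sum_univ_two, Matrix.add_apply, Matrix.sub_apply, adjugate_apply00, adjugate_apply01,
    adjugate_apply10, adjugate_apply11, Matrix.neg_apply, Fin.isValue, Fin.mk_zero, Fin.mk_one]
  ring

/-- The pairing as a linear map into the dual. -/
noncomputable def pairPhi : (M2 × M2) →ₗ[ℂ] Module.Dual ℂ (M2 × M2) :=
  LinearMap.mk₂ ℂ pairB
    (by intro q q' p; simp [pairB, add_mul, Matrix.trace_add]; ring)
    (by intro s q p; simp [pairB, Matrix.smul_mul, Matrix.trace_smul]; ring)
    (by intro q p p'; simp [pairB, adjugate_add, mul_add, Matrix.trace_add]; ring)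
    (by intro s q p; simp [pairB, adjugate_csmul, Matrix.mul_smul, Matrix.trace_smul]; ring)

@[simp] lemma pairPhi_apply (q p : M2 × M2) : pairPhi q p = pairB q p := rfl

lemma pairPhi_injective : Function.Injective pairPhi := by
  rw [← LinearMap.ker_eq_bot]
  apply LinearMap.ker_eq_bot'.mpr
  intro q hq
  have h : ∀ p : M2 × M2, pairB q p = 0 := by
    intro p
    have := LinearMap.congr_fun hq p
    simpa using this
  have e1 : q.1 0 0 = 0 := by
    have := h ((!![(0:ℂ),0;0,1] : M2), 0)
    simpa [pairB, Matrix.adjugate_fin_two, Matrix.trace_fin_two, Matrix.mul_apply,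
      Fin.sum_univ_two, neg_eq_zero] using this
  have e2 : q.1 1 0 = 0 := by
    have := h ((!![(0:ℂ),-1;0,0] : M2), 0)
    simpa [pairB, Matrix.adjugate_fin_two, Matrix.trace_fin_two, Matrix.mul_apply,
      Fin.sum_univ_two, neg_eq_zero] using this
  have e3 : q.1 0 1 = 0 := by
    have := h ((!![(0:ℂ),0;-1,0] : M2), 0)
    simpa [pairB, Matrix.adjugate_fin_two, Matrix.trace_fin_two, Matrix.mul_apply,
      Fin.sum_univ_two, neg_eq_zero] using this
  have e4 : q.1 1 1 = 0 := by
    have := h ((!![(1:ℂ),0;0,0] : M2), 0)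
    simpa [pairB, Matrix.adjugate_fin_two, Matrix.trace_fin_two, Matrix.mul_apply,
      Fin.sum_univ_two, neg_eq_zero] using this
  have e5 : q.2 0 0 = 0 := by
    have := h (0, (!![(0:ℂ),0;0,1] : M2))
    simpa [pairB, Matrix.adjugate_fin_two, Matrix.trace_fin_two, Matrix.mul_apply,
      Fin.sum_univ_two] using this
  have e6 : q.2 1 0 = 0 := by
    have := h (0, (!![(0:ℂ),-1;0,0] : M2))
    simpa [pairB, Matrix.adjugate_fin_two, Matrix.trace_fin_two, Matrix.mul_apply,
      Fin.sum_univ_two] using this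
  have e7 : q.2 0 1 = 0 := by
    have := h (0, (!![(0:ℂ),0;-1,0] : M2))
    simpa [pairB, Matrix.adjugate_fin_two, Matrix.trace_fin_two, Matrix.mul_apply,
      Fin.sum_univ_two] using this
  have e8 : q.2 1 1 = 0 := by
    have := h (0, (!![(1:ℂ),0;0,0] : M2))
    simpa [pairB, Matrix.adjugate_fin_two, Matrix.trace_fin_two, Matrix.mul_apply,
      Fin.sum_univ_two] using this
  refine Prod.ext ?_ ?_ <;> ext i j <;> fin_cases i <;> fin_cases j <;> simpa

lemma trace_mul_conjTranspose_self (M : M2) :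
    Matrix.trace (M * Mᴴ)
      = ((Complex.normSq (M 0 0) + Complex.normSq (M 0 1)
          + Complex.normSq (M 1 0) + Complex.normSq (M 1 1) : ℝ) : ℂ) := by
  simp [Matrix.trace_fin_two, Matrix.mul_apply, Fin.sum_univ_two,
    Matrix.conjTranspose_apply, Complex.mul_conj]
  ring

/-- For a nonzero isotropic vector `(a, b)` (i.e. `det a = det b`, `(a,b) ≠ (0,0)`),
the kernel of Clifford multiplication `m_{a,b}` has complex dimension exactly 4. -/
theorem finrank_ker_cliffordMul (a b : M2)
    (hiso : a.det = b.det) (hne : (a, b) ≠ (0, 0)) :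
    Module.finrank ℂ (LinearMap.ker (cliffordMul a b)) = 4 := by
  classical
  set f := cliffordMul a b with hf
  set g := gMul a b with hg
  -- choose a companion vector with nonzero pairing against (a, b)
  set c : M2 := (a.adjugate)ᴴ with hc
  set d : M2 := -((b.adjugate)ᴴ) with hd
  set κ : ℂ := Matrix.trace (a.adjugate * c) - Matrix.trace (b.adjugate * d) with hκdef
  have hκ : κ ≠ 0 := by
    intro h0
    apply hne
    have hκ2 : κ = Matrix.trace (a.adjugate * (a.adjugate)ᴴ)
        + Matrix.trace (b.adjugate * (b.adjugate)ᴴ) := by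
      rw [hκdef, hc, hd, Matrix.mul_neg, Matrix.trace_neg, sub_neg_eq_add]
    rw [hκ2, trace_mul_conjTranspose_self, trace_mul_conjTranspose_self] at h0
    rw [← Complex.ofReal_add, Complex.ofReal_eq_zero] at h0
    have n1 := Complex.normSq_nonneg (a.adjugate 0 0)
    have n2 := Complex.normSq_nonneg (a.adjugate 0 1)
    have n3 := Complex.normSq_nonneg (a.adjugate 1 0)
    have n4 := Complex.normSq_nonneg (a.adjugate 1 1)
    have n5 := Complex.normSq_nonneg (b.adjugate 0 0)
    have n6 := Complex.normSq_nonneg (b.adjugate 0 1)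
    have n7 := Complex.normSq_nonneg (b.adjugate 1 0)
    have n8 := Complex.normSq_nonneg (b.adjugate 1 1)
    have w1 : a 1 1 = 0 := by
      have h' : a.adjugate 0 0 = 0 := Complex.normSq_eq_zero.mp (by linarith)
      simpa using h'
    have w2 : a 0 1 = 0 := by
      have h' : a.adjugate 0 1 = 0 := Complex.normSq_eq_zero.mp (by linarith)
      simpa [neg_eq_zero] using h'
    have w3 : a 1 0 = 0 := by
      have h' : a.adjugate 1 0 = 0 := Complex.normSq_eq_zero.mp (by linarith)
      simpa [neg_eq_zero] using h'
    have w4 : a 0 0 = 0 := by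
      have h' : a.adjugate 1 1 = 0 := Complex.normSq_eq_zero.mp (by linarith)
      simpa using h'
    have v1 : b 1 1 = 0 := by
      have h' : b.adjugate 0 0 = 0 := Complex.normSq_eq_zero.mp (by linarith)
      simpa using h'
    have v2 : b 0 1 = 0 := by
      have h' : b.adjugate 0 1 = 0 := Complex.normSq_eq_zero.mp (by linarith)
      simpa [neg_eq_zero] using h'
    have v3 : b 1 0 = 0 := by
      have h' : b.adjugate 1 0 = 0 := Complex.normSq_eq_zero.mp (by linarith)
      simpa [neg_eq_zero] using h'
    have v4 : b 0 0 = 0 := by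
      have h' : b.adjugate 1 1 = 0 := Complex.normSq_eq_zero.mp (by linarith)
      simpa using h'
    have ha : a = 0 := by
      ext i j
      fin_cases i <;> fin_cases j <;>
        simp only [Fin.mk_zero, Fin.mk_one, Matrix.zero_apply, Fin.isValue] <;> assumption
    have hb : b = 0 := by
      ext i j
      fin_cases i <;> fin_cases j <;>
        simp only [Fin.mk_zero, Fin.mk_one, Matrix.zero_apply, Fin.isValue] <;> assumption
    rw [ha, hb]
  -- kernel of f equals range of g
  have hkr : LinearMap.ker f = LinearMap.range g := by
    apply le_antisymm
    · intro p hp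
      rw [LinearMap.mem_ker] at hp
      refine ⟨κ⁻¹ • (cliffordMul c d p), ?_⟩
      rw [_root_.map_smul]
      have hm := mixed_identity a b c d p
      rw [show cliffordMul a b p = 0 from hp, map_zero, add_zero] at hm
      rw [hg, hm, ← hκdef, smul_smul, inv_mul_cancel₀ hκ, one_smul]
    · rintro _ ⟨q, rfl⟩
      rw [LinearMap.mem_ker, hg, hf, mul_gMul, hiso, sub_self, zero_smul]
  -- the pairing gives a linear equivalence with the dual
  have hdim : Module.finrank ℂ (M2 × M2) = Module.finrank ℂ (Module.Dual ℂ (M2 × M2)) :=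
    (Subspace.dual_finrank_eq).symm
  have hsurj : Function.Surjective pairPhi :=
    (LinearMap.injective_iff_surjective_of_finrank_eq_finrank hdim).mp pairPhi_injective
  let Φe : (M2 × M2) ≃ₗ[ℂ] Module.Dual ℂ (M2 × M2) :=
    LinearEquiv.ofBijective pairPhi ⟨pairPhi_injective, hsurj⟩
  -- g is conjugate to the dual map of f
  have hcomp : g = (Φe.symm.toLinearMap) ∘ₗ (f.dualMap ∘ₗ pairPhi) := by
    apply LinearMap.ext
    intro q
    simp only [LinearMap.comp_apply, LinearEquiv.coe_coe]
    rw [LinearEquiv.eq_symm_apply]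
    apply LinearMap.ext
    intro p
    show pairPhi (g q) p = f.dualMap (pairPhi q) p
    rw [LinearMap.dualMap_apply]
    exact adjoint_identity a b q p
  -- hence g and f have the same rank
  have hrange_eq : LinearMap.range (f.dualMap ∘ₗ pairPhi) = LinearMap.range f.dualMap := by
    rw [LinearMap.range_comp, LinearMap.range_eq_top.mpr hsurj, Submodule.map_top]
  have hrank : Module.finrank ℂ (LinearMap.range g) = Module.finrank ℂ (LinearMap.range f) := by
    rw [hcomp, LinearMap.range_comp, LinearEquiv.finrank_map_eq, hrange_eq,
      LinearMap.finrank_range_dualMap_eq_finrank_range]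
  have hrn := LinearMap.finrank_range_add_finrank_ker f
  have hW8 : Module.finrank ℂ (M2 × M2) = 8 := by
    rw [Module.finrank_prod]
    rw [Module.finrank_matrix]
    simp
  have hker_eq : Module.finrank ℂ (LinearMap.ker f) = Module.finrank ℂ (LinearMap.range f) := by
    rw [hkr, hrank]
  rw [hW8] at hrn
  rw [hker_eq] at hrn ⊢
  omega
end

section
/- Let (a,b) and (a′,b′) be nonzero elements of W which are isotropic for q (det a = det b and det a′ = det b′) and which are not complex scalar multiples of each other. Then the intersection ker m_{a,b} ∩ ker m_{a′,b′} has complex dimension 2 if tr(a·adj(a′)) = tr(b·adj(b′)) (i.e. (a,b) and (a′,b′) are orthogonal for the polar bilinear form of q), and has dimension 0 otherwise. -/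
open Matrix

open Matrix Module



lemma adj_adj (m : M2) : m.adjugate.adjugate = m := by
  rw [Matrix.adjugate_adjugate _ (by simp : Fintype.card (Fin 2) ≠ 1)]
  simp

lemma adj_trace_smul (m : M2) : m.adjugate = m.trace • 1 - m := by
  rw [Matrix.adjugate_fin_two]
  ext i j
  fin_cases i <;> fin_cases j <;>
    simp [Matrix.trace_fin_two, Matrix.one_apply, Matrix.smul_apply, Matrix.sub_apply] <;> ring

lemma ch2 (m : M2) : m * m = m.trace • m - m.det • 1 := by
  ext i j
  fin_cases i <;> fin_cases j <;>
    simp [Matrix.mul_apply, Fin.sum_univ_two, Matrix.trace_fin_two, Matrix.det_fin_two,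
      Matrix.one_apply, Matrix.smul_apply, Matrix.sub_apply] <;> ring

lemma trace_adj (m : M2) : m.adjugate.trace = m.trace := by
  rw [Matrix.adjugate_fin_two]; simp [Matrix.trace_fin_two]; ring

lemma cross_adj (M N : M2) :
    M * N.adjugate + N * M.adjugate = (M * N.adjugate).trace • 1 := by
  ext i j
  fin_cases i <;> fin_cases j <;>
    simp [Matrix.adjugate_fin_two, Matrix.mul_apply, Fin.sum_univ_two, Matrix.trace_fin_two,
      Matrix.one_apply, Matrix.smul_apply, Matrix.add_apply] <;> ring

lemma trace_mul_adj_comm (M N : M2) :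
    (M * N.adjugate).trace = (N * M.adjugate).trace := by
  simp [Matrix.adjugate_fin_two, Matrix.mul_apply, Fin.sum_univ_two, Matrix.trace_fin_two]
  ring

lemma adj_eq_zero_iff (m : M2) : m.adjugate = 0 ↔ m = 0 := by
  constructor
  · intro h
    have := adj_adj m
    rw [h] at this
    simpa [Matrix.adjugate_zero] using this.symm
  · intro h; simp [h]


/-- the Sylvester-type operator `z ↦ p·z − z·q`. -/
noncomputable def sylv (p q : M2) : M2 →ₗ[ℂ] M2 where
  toFun z := p * z - z * q
  map_add' z w := by noncomm_ring
  map_smul' c z := by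
    simp only [Matrix.smul_mul, Matrix.mul_smul, RingHom.id_apply, smul_sub]

lemma sylv_apply (p q z : M2) : sylv p q z = p * z - z * q := rfl

lemma indep_of_det {v w : Fin 2 → ℂ} (h : v 0 * w 1 - v 1 * w 0 ≠ 0) :
    LinearIndependent ℂ ![v, w] := by
  rw [LinearIndependent.pair_iff]
  intro s t hst
  have h0 := congr_fun hst 0
  have h1 := congr_fun hst 1
  simp only [Pi.add_apply, Pi.smul_apply, smul_eq_mul, Pi.zero_apply] at h0 h1
  constructor
  · have : s * (v 0 * w 1 - v 1 * w 0) = 0 := by linear_combination w 1 * h0 - w 0 * h1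
    exact (mul_eq_zero.1 this).resolve_right h
  · have : t * (v 0 * w 1 - v 1 * w 0) = 0 := by linear_combination (- v 1) * h0 + v 0 * h1
    exact (mul_eq_zero.1 this).resolve_right h

lemma exists_cyclic {q : M2} (hq : ∀ c : ℂ, q ≠ c • 1) :
    ∃ v : Fin 2 → ℂ, LinearIndependent ℂ ![v, q.mulVec v] := by
  by_cases h10 : q 1 0 ≠ 0
  · refine ⟨![1, 0], indep_of_det ?_⟩
    simp [Matrix.mulVec, dotProduct, Fin.sum_univ_two]
    simpa using h10
  by_cases h01 : q 0 1 ≠ 0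
  · refine ⟨![0, 1], indep_of_det ?_⟩
    simp [Matrix.mulVec, dotProduct, Fin.sum_univ_two]
    simpa using h01
  push_neg at h10 h01
  by_cases hd : q 0 0 = q 1 1
  · exfalso
    exact hq (q 0 0) (by
      ext i j
      fin_cases i <;> fin_cases j <;>
        simp [Matrix.one_apply, h10, h01, hd])
  · refine ⟨![1, 1], indep_of_det ?_⟩
    simp [Matrix.mulVec, dotProduct, Fin.sum_univ_two, h10, h01]
    exact fun hc => hd (by linear_combination -hc)

/-- matrix acting by `z ↦ z.mulVec v` is linear in `z`. -/
noncomputable def mulVecAt (v : Fin 2 → ℂ) : M2 →ₗ[ℂ] (Fin 2 → ℂ) where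
  toFun z := z.mulVec v
  map_add' z w := Matrix.add_mulVec z w v
  map_smul' c z := by simp [Matrix.smul_mulVec]

lemma eq_zero_of_mulVec_basis {z : M2} {v w : Fin 2 → ℂ}
    (hli : LinearIndependent ℂ ![v, w]) (hv : z.mulVec v = 0) (hw : z.mulVec w = 0) :
    z = 0 := by
  have hcard : Fintype.card (Fin 2) = finrank ℂ (Fin 2 → ℂ) := by
    simp [Module.finrank_fin_fun]
  let b := basisOfLinearIndependentOfCardEqFinrank hli hcard
  have hb : ⇑b = ![v, w] := coe_basisOfLinearIndependentOfCardEqFinrank hli hcard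
  have : z.mulVecLin = 0 := by
    apply b.ext
    intro i
    have := congr_fun hb i
    fin_cases i <;> simp_all [Matrix.mulVecLin]
  ext i j
  have h2 : z.mulVec (Pi.single j 1) = 0 := by
    rw [← Matrix.mulVecLin_apply, this]; rfl
  have h3 := congr_fun h2 i
  simpa [Matrix.mulVec_single] using h3

lemma mulVecLin_ne_zero {n : M2} (hn : n ≠ 0) : n.mulVecLin ≠ 0 := by
  intro h0
  apply hn
  ext i j
  have h2 : n.mulVec (Pi.single j 1) = 0 := by rw [← Matrix.mulVecLin_apply, h0]; rfl
  have h3 := congr_fun h2 i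
  simpa [Matrix.mulVec_single] using h3

lemma col_mem_ker {n z : M2} (h : n * z = 0) (j : Fin 2) :
    (fun i => z i j) ∈ LinearMap.ker n.mulVecLin := by
  rw [LinearMap.mem_ker]
  ext i
  have h' : (n * z) i j = 0 := by rw [h]; rfl
  simpa [Matrix.mulVecLin, Matrix.mulVec, dotProduct, Matrix.mul_apply] using h'

lemma finrank_ker_mulLeft_le {n : M2} (hn : n ≠ 0) :
    Module.finrank ℂ (LinearMap.ker (LinearMap.mulLeft ℂ n : M2 →ₗ[ℂ] M2)) ≤ 2 := by
  have hK0 : Module.finrank ℂ (LinearMap.ker n.mulVecLin) ≤ 1 := by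
    have hrn := n.mulVecLin.finrank_range_add_finrank_ker
    rw [Module.finrank_fin_fun] at hrn
    have hr : 1 ≤ Module.finrank ℂ (LinearMap.range n.mulVecLin) := by
      rw [Nat.one_le_iff_ne_zero, ne_eq, Submodule.finrank_eq_zero, LinearMap.range_eq_bot]
      exact mulVecLin_ne_zero hn
    omega
  have hmem : ∀ (z : ↥(LinearMap.ker (LinearMap.mulLeft ℂ n : M2 →ₗ[ℂ] M2))) (j : Fin 2),
      (fun i => z.1 i j) ∈ LinearMap.ker n.mulVecLin := by
    intro z j
    have hz := z.2
    rw [LinearMap.mem_ker] at hz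
    exact col_mem_ker hz j
  let Θ : ↥(LinearMap.ker (LinearMap.mulLeft ℂ n : M2 →ₗ[ℂ] M2)) →ₗ[ℂ] ↥(LinearMap.ker n.mulVecLin) × ↥(LinearMap.ker n.mulVecLin) :=
  { toFun := fun z => (⟨fun i => z.1 i 0, hmem z 0⟩, ⟨fun i => z.1 i 1, hmem z 1⟩)
    map_add' := by intro z w; ext <;> simp
    map_smul' := by intro c z; ext <;> simp }
  have hinj : Function.Injective Θ := by
    intro z w hzw
    have h0 := congr_fun (congrArg (fun u => (u.1 : Fin 2 → ℂ)) hzw)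
    have h1 := congr_fun (congrArg (fun u => (u.2 : Fin 2 → ℂ)) hzw)
    apply Subtype.ext
    ext i j
    fin_cases j
    · exact h0 i
    · exact h1 i
  calc Module.finrank ℂ (LinearMap.ker (LinearMap.mulLeft ℂ n : M2 →ₗ[ℂ] M2))
      ≤ Module.finrank ℂ (↥(LinearMap.ker n.mulVecLin) × ↥(LinearMap.ker n.mulVecLin)) :=
        LinearMap.finrank_le_finrank_of_injective hinj
    _ = Module.finrank ℂ (LinearMap.ker n.mulVecLin)
        + Module.finrank ℂ (LinearMap.ker n.mulVecLin) := Module.finrank_prod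
    _ ≤ 2 := by omega

lemma finrank_ker_sylv_le {p q : M2} (htr : p.trace = q.trace)
    (hns : ¬ ∃ e : ℂ, p = e • (1 : M2) ∧ q = e • (1 : M2)) :
    Module.finrank ℂ (LinearMap.ker (sylv p q)) ≤ 2 := by
  by_cases hq : ∃ c : ℂ, q = c • (1 : M2)
  · obtain ⟨c, hc⟩ := hq
    have hp : p - c • (1 : M2) ≠ 0 := by
      intro h
      exact hns ⟨c, by rwa [sub_eq_zero] at h, hc⟩
    have hker : LinearMap.ker (sylv p q)
        = LinearMap.ker (LinearMap.mulLeft ℂ (p - c • (1 : M2)) : M2 →ₗ[ℂ] M2) := by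
      ext z
      simp only [LinearMap.mem_ker, sylv_apply, LinearMap.mulLeft_apply, hc,
        Matrix.mul_smul, Matrix.smul_mul, mul_one, one_mul, sub_mul]
    rw [hker]
    exact finrank_ker_mulLeft_le hp
  · push_neg at hq
    obtain ⟨v, hli⟩ := exists_cyclic hq
    set f := (mulVecAt v).comp (LinearMap.ker (sylv p q)).subtype with hf
    have hinj : Function.Injective f := by
      rw [← LinearMap.ker_eq_bot, Submodule.eq_bot_iff]
      rintro ⟨z, hz⟩ hz0
      have hzv : z.mulVec v = 0 := hz0
      rw [LinearMap.mem_ker, sylv_apply, sub_eq_zero] at hz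
      have hzw : z.mulVec (q.mulVec v) = 0 := by
        rw [Matrix.mulVec_mulVec, ← hz, ← Matrix.mulVec_mulVec, hzv, Matrix.mulVec_zero]
      exact Subtype.ext (eq_zero_of_mulVec_basis hli hzv hzw)
    have := LinearMap.finrank_le_finrank_of_injective hinj
    simpa [Module.finrank_fin_fun] using this

lemma finrank_M2 : Module.finrank ℂ M2 = 4 := by
  simp [Module.finrank_matrix]

lemma finrank_ker_sylv {p q : M2} (htr : p.trace = q.trace) (hdet : p.det = q.det)
    (hns : ¬ ∃ e : ℂ, p = e • (1 : M2) ∧ q = e • (1 : M2)) :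
    Module.finrank ℂ (LinearMap.ker (sylv p q)) = 2 := by
  refine le_antisymm (finrank_ker_sylv_le htr hns) ?_
  have hrange : LinearMap.range (sylv p q.adjugate) ≤ LinearMap.ker (sylv p q) := by
    rintro w ⟨z, rfl⟩
    rw [LinearMap.mem_ker]
    simp only [sylv_apply]
    have key : p * (p * z - z * q.adjugate) - (p * z - z * q.adjugate) * q
        = (p * p) * z - p * z * (q.adjugate + q) + z * (q.adjugate * q) := by noncomm_ring
    rw [key, Matrix.adjugate_mul, ch2, adj_trace_smul, sub_add_cancel, htr, hdet]
    simp only [Matrix.smul_mul, Matrix.mul_smul, sub_mul, one_mul, mul_one]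
    abel
  have hker2 : Module.finrank ℂ (LinearMap.ker (sylv p q.adjugate)) ≤ 2 := by
    apply finrank_ker_sylv_le
    · rw [trace_adj, htr]
    · rintro ⟨e, hpe, hqe⟩
      apply hns
      refine ⟨e, hpe, ?_⟩
      have := congrArg Matrix.adjugate hqe
      rw [adj_adj] at this
      rw [this, Matrix.adjugate_smul, Matrix.adjugate_one]
      norm_num
  have hrn := (sylv p q.adjugate).finrank_range_add_finrank_ker
  rw [finrank_M2] at hrn
  have := Submodule.finrank_mono hrange
  omega
lemma smul_cancel {c : ℂ} (hc : c ≠ 0) {u v : M2} (h : c • u = c • v) : u = v :=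
  smul_right_injective M2 hc h

lemma left_cancel {m u v : M2} (hm : m.det ≠ 0) (h : m * u = m * v) : u = v := by
  have h2 := congrArg (fun w => m.adjugate * w) h
  simp only [← mul_assoc, Matrix.adjugate_mul, Matrix.smul_mul, one_mul] at h2
  exact smul_cancel hm h2

lemma right_cancel {m u v : M2} (hm : m.det ≠ 0) (h : u * m = v * m) : u = v := by
  have h2 := congrArg (fun w => w * m.adjugate) h
  simp only [mul_assoc, Matrix.mul_adjugate, Matrix.mul_smul, mul_one] at h2
  exact smul_cancel hm h2

lemma adjl {m : M2} (n : M2) : m.adjugate * (m * n) = m.det • n := by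
  rw [← mul_assoc, Matrix.adjugate_mul, Matrix.smul_mul, one_mul]

lemma mull {m : M2} (n : M2) : m * (m.adjugate * n) = m.det • n := by
  rw [← mul_assoc, Matrix.mul_adjugate, Matrix.smul_mul, one_mul]

lemma adj_inj {u v : M2} (h : u.adjugate = v.adjugate) : u = v := by
  have := congrArg Matrix.adjugate h
  rwa [adj_adj, adj_adj] at this

lemma cliffordMul_apply_s9 (a b x y : M2) : cliffordMul a b (x, y) =
    (a.adjugate * x.adjugate + y.adjugate * b, b * x + y * a.adjugate) := rfl

lemma ker_cliffordMul_graph {a b : M2} (ha : a.det ≠ 0) (hiso : a.det = b.det) (x y : M2) :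
    (x, y) ∈ LinearMap.ker (cliffordMul a b) ↔ y = (-(a.det)⁻¹) • (b * x * a) := by
  rw [LinearMap.mem_ker, cliffordMul_apply_s9, Prod.mk_eq_zero]
  constructor
  · rintro ⟨-, h2⟩
    have h3 := congrArg (fun w => w * a) (eq_neg_of_add_eq_zero_right h2)
    simp only [mul_assoc, Matrix.adjugate_mul, Matrix.mul_smul, mul_one, neg_mul] at h3
    -- h3 : y * (a.det • 1)… : y * adjugate a * a = -(b * x * a) i.e. a.det • y = -(b*(x*a))
    apply smul_cancel ha
    rw [smul_smul, mul_neg, mul_inv_cancel₀ ha, neg_smul, one_smul, mul_assoc]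
    exact h3
  · rintro rfl
    constructor
    · have hadjy : ((-(a.det)⁻¹) • (b * x * a)).adjugate
          = (-(a.det)⁻¹) • (a.adjugate * (x.adjugate * b.adjugate)) := by
        rw [adjugate_csmul, Matrix.adjugate_mul_distrib, Matrix.adjugate_mul_distrib]
      rw [hadjy, Matrix.smul_mul, mul_assoc, mul_assoc, Matrix.adjugate_mul, ← hiso]
      rw [Matrix.mul_smul, Matrix.mul_smul, mul_one, smul_smul]
      have hc : -(a.det)⁻¹ * a.det = -1 := by field_simp
      rw [hc, neg_one_smul, add_neg_cancel]
    · rw [Matrix.smul_mul, mul_assoc, Matrix.mul_adjugate, Matrix.mul_smul, mul_one, smul_smul]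
      have hc : -(a.det)⁻¹ * a.det = -1 := by field_simp
      rw [hc, neg_one_smul, add_neg_cancel]

lemma adjr {m : M2} (n : M2) : n * m * m.adjugate = m.det • n := by
  rw [mul_assoc, Matrix.mul_adjugate, Matrix.mul_smul, mul_one]

lemma adjr' {m : M2} (n : M2) : n * m.adjugate * m = m.det • n := by
  rw [mul_assoc, Matrix.adjugate_mul, Matrix.mul_smul, mul_one]

/-- the "adjugate flip": `adj u · adj v + adj w · z = 0 ↔ v·u + adj z·w = 0`. -/
lemma adj_flip {u v w z : M2} :
    u.adjugate * v.adjugate + w.adjugate * z = 0 ↔ v * u + z.adjugate * w = 0 := by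
  constructor
  · intro h
    have h2 := congrArg Matrix.adjugate h
    simp only [adjugate_add, Matrix.adjugate_mul_distrib, adj_adj, Matrix.adjugate_zero] at h2
    exact h2
  · intro h
    have h2 := congrArg Matrix.adjugate h
    simp only [adjugate_add, Matrix.adjugate_mul_distrib, adj_adj, Matrix.adjugate_zero] at h2
    exact h2

lemma ker_cliffordMul_cond {a b : M2} (ha : a.det ≠ 0) (hiso : a.det = b.det)
    (a' b' x : M2) :
    ((x, (-(a.det)⁻¹) • (b * x * a)) ∈ LinearMap.ker (cliffordMul a' b')) ↔
      ((b' * b.adjugate) * (b * x) = (b * x) * (a * a'.adjugate)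
        ∧ (b * b'.adjugate) * (b * x) = (b * x) * (a' * a.adjugate)) := by
  have hdb : b.det ≠ 0 := by rw [← hiso]; exact ha
  rw [LinearMap.mem_ker, cliffordMul_apply_s9, Prod.mk_eq_zero, adj_flip]
  simp only [← mul_assoc]
  constructor
  · rintro ⟨h1, h2⟩
    -- h1 : x * a' + b'.adjugate * (-(δ⁻¹) • (b*x*a)) = 0  (left-assoc)
    -- h2 : b' * x + (-(δ⁻¹) • (b*x*a)) * a'.adjugate = 0
    rw [Matrix.mul_smul, ← mul_assoc, ← mul_assoc] at h1
    rw [Matrix.smul_mul] at h2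
    have h1' : x * a' = (a.det)⁻¹ • (b'.adjugate * b * x * a) := by
      have := add_eq_zero_iff_eq_neg.mp h1
      rwa [neg_smul, neg_neg] at this
    have h2' : b' * x = (a.det)⁻¹ • (b * x * a * a'.adjugate) := by
      have := add_eq_zero_iff_eq_neg.mp h2
      rwa [neg_smul, neg_neg] at this
    constructor
    · rw [adjr' b', Matrix.smul_mul, ← hiso, h2', smul_smul, mul_inv_cancel₀ ha, one_smul]
    · -- goal : b * b'.adjugate * b * x = b * x * a' * a.adjugate
      have : b * x * a' * a.adjugate = b * (x * a') * a.adjugate := by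
        simp only [mul_assoc]
      rw [this, h1', Matrix.mul_smul, Matrix.smul_mul]
      simp only [← mul_assoc]
      rw [adjr (b * b'.adjugate * b * x), smul_smul, inv_mul_cancel₀ ha, one_smul]
  · rintro ⟨g1, g2⟩
    constructor
    · -- x * a' + b'.adjugate * (-(δ⁻¹) • (b*x*a)) = 0
      rw [Matrix.mul_smul, ← mul_assoc, ← mul_assoc]
      have h1' : x * a' = (a.det)⁻¹ • (b'.adjugate * b * x * a) := by
        -- from g2 : b * b'.adjugate * b * x = b * x * a' * a.adjugate
        have step1 : b * (b'.adjugate * b * x) = b * (x * a' * a.adjugate) := by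
          simp only [← mul_assoc]; exact g2
        have step2 := left_cancel hdb step1
        have step3 := congrArg (fun w => w * a) step2
        rw [adjr' (x * a')] at step3
        rw [step3, smul_smul, inv_mul_cancel₀ ha, one_smul]
      rw [h1', neg_smul, add_neg_cancel]
    · rw [Matrix.smul_mul]
      have h2' : b' * x = (a.det)⁻¹ • (b * x * a * a'.adjugate) := by
        rw [← g1, adjr' b', Matrix.smul_mul, ← hiso, smul_smul, inv_mul_cancel₀ ha, one_smul]
      rw [h2', neg_smul, add_neg_cancel]

lemma core_invertible (a b a' b' : M2) (ha : a.det ≠ 0)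
    (hiso : a.det = b.det) (hiso' : a'.det = b'.det)
    (hprop : ∀ c : ℂ, (a', b') ≠ c • ((a, b) : M2 × M2)) :
    Module.finrank ℂ
        ↥(LinearMap.ker (cliffordMul a b) ⊓ LinearMap.ker (cliffordMul a' b'))
      = if (a * a'.adjugate).trace = (b * b'.adjugate).trace then 2 else 0 := by
  have hdb : b.det ≠ 0 := by rw [← hiso]; exact ha
  set ta := (a * a'.adjugate).trace with hta
  set tb := (b * b'.adjugate).trace with htb
  set p := b' * b.adjugate with hp
  set q₁ := a * a'.adjugate with hq₁
  set p₂ := b * b'.adjugate with hp₂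
  set q₂ := a' * a.adjugate with hq₂
  let D0 : M2 →ₗ[ℂ] M2 × M2 := (sylv p q₁).prod (sylv p₂ q₂)
  let ψ : M2 →ₗ[ℂ] M2 × M2 :=
  { toFun := fun x => (x, (-(a.det)⁻¹) • (b * x * a))
    map_add' := by intro u v; simp [mul_add, add_mul, smul_add]
    map_smul' := by
      intro c u
      simp [Matrix.mul_smul, Matrix.smul_mul, smul_smul, mul_comm] }
  have hψx : ∀ x : M2, ψ x = (x, (-(a.det)⁻¹) • (b * x * a)) := fun _ => rfl
  have hK : LinearMap.ker (cliffordMul a b) ⊓ LinearMap.ker (cliffordMul a' b')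
      = Submodule.map ψ (LinearMap.ker (D0.comp (LinearMap.mulLeft ℂ b))) := by
    apply le_antisymm
    · rintro ⟨x, y⟩ ⟨hk, hk'⟩
      have hy := (ker_cliffordMul_graph ha hiso x y).mp hk
      refine ⟨x, ?_, by rw [hψx, ← hy]⟩
      rw [SetLike.mem_coe, LinearMap.mem_ker]
      have hcond := (ker_cliffordMul_cond ha hiso a' b' x).mp (by rwa [hy] at hk')
      have : D0.comp (LinearMap.mulLeft ℂ b) x = (sylv p q₁ (b * x), sylv p₂ q₂ (b * x)) := rfl
      rw [this, Prod.mk_eq_zero, sylv_apply, sylv_apply, sub_eq_zero, sub_eq_zero]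
      exact hcond
    · rintro w ⟨x, hx, rfl⟩
      rw [SetLike.mem_coe, LinearMap.mem_ker] at hx
      have hx' : (sylv p q₁ (b * x), sylv p₂ q₂ (b * x)) = 0 := hx
      rw [Prod.mk_eq_zero, sylv_apply, sylv_apply, sub_eq_zero, sub_eq_zero] at hx'
      rw [Submodule.mem_inf]
      constructor
      · exact (ker_cliffordMul_graph ha hiso x _).mpr rfl
      · exact (ker_cliffordMul_cond ha hiso a' b' x).mpr hx'
  have hψinj : Function.Injective ψ := by
    intro u v h
    exact congrArg Prod.fst h
  rw [hK, ← LinearEquiv.finrank_eq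
    (Submodule.equivMapOfInjective ψ hψinj (LinearMap.ker (D0.comp (LinearMap.mulLeft ℂ b))))]
  -- remove the invertible left multiplication by b
  let eLb : M2 ≃ₗ[ℂ] M2 := LinearEquiv.ofLinear (LinearMap.mulLeft ℂ b)
    (LinearMap.mulLeft ℂ ((b.det)⁻¹ • b.adjugate))
    (by
      ext z
      simp [LinearMap.mulLeft_apply, Matrix.smul_mul, mull, smul_smul]
      field_simp)
    (by
      ext z
      simp [LinearMap.mulLeft_apply, Matrix.smul_mul, Matrix.mul_smul, adjl, smul_smul]
      field_simp)
  have hcomp : LinearMap.ker (D0.comp (LinearMap.mulLeft ℂ b))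
      = Submodule.map (eLb.symm : M2 →ₗ[ℂ] M2) (LinearMap.ker D0) := by
    rw [LinearMap.ker_comp]
    rw [show (LinearMap.mulLeft ℂ b) = (eLb : M2 →ₗ[ℂ] M2) from rfl]
    exact Submodule.comap_equiv_eq_map_symm eLb (LinearMap.ker D0)
  rw [hcomp, LinearEquiv.finrank_map_eq eLb.symm]
  have hkerD0 : LinearMap.ker D0 = LinearMap.ker (sylv p q₁) ⊓ LinearMap.ker (sylv p₂ q₂) :=
    LinearMap.ker_prod _ _
  have hsum_q : q₁ + q₂ = ta • 1 := cross_adj a a'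
  have hsum_p : p + p₂ = tb • 1 := by
    rw [hp, hp₂, cross_adj b' b, trace_mul_adj_comm b' b]
  by_cases hC : ta = tb
  · rw [if_pos hC]
    have hker2 : LinearMap.ker D0 = LinearMap.ker (sylv p q₁) := by
      rw [hkerD0]
      apply le_antisymm inf_le_left
      intro z hz
      rw [LinearMap.mem_ker, sylv_apply, sub_eq_zero] at hz
      refine ⟨by
        simp only [SetLike.mem_coe, LinearMap.mem_ker, sylv_apply, sub_eq_zero]
        exact hz, ?_⟩
      simp only [SetLike.mem_coe, LinearMap.mem_ker, sylv_apply, sub_eq_zero]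
      have hp₂' : p₂ = tb • 1 - p := by rw [← hsum_p]; abel
      have hq₂' : q₂ = ta • 1 - q₁ := by rw [← hsum_q]; abel
      rw [hp₂', hq₂', sub_mul, mul_sub, Matrix.smul_mul, one_mul, Matrix.mul_smul, mul_one,
        hz, hC]
    rw [hker2]
    apply finrank_ker_sylv
    · rw [hp, trace_mul_adj_comm b' b, ← htb, ← hC, hta, hq₁]
    · rw [hp, hq₁, Matrix.det_mul, Matrix.det_mul, Matrix.det_adjugate, Matrix.det_adjugate]
      rw [hiso, hiso']
      norm_num [mul_comm]
    · rintro ⟨e, hpe, hqe⟩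
      have hb' : b' = ((b.det)⁻¹ * e) • b := by
        have h1 := congrArg (fun w => w * b) hpe
        rw [hp, adjr' b', Matrix.smul_mul, one_mul] at h1
        have h2 := (eq_inv_smul_iff₀ hdb).mpr h1
        rw [smul_smul] at h2
        exact h2
      have ha' : a' = ((a.det)⁻¹ * e) • a := by
        have h1 := congrArg (fun w => a.adjugate * w) hqe
        rw [hq₁, adjl, Matrix.mul_smul, mul_one] at h1
        have h1' := (eq_inv_smul_iff₀ ha).mpr h1
        have h2 := congrArg Matrix.adjugate h1'
        rw [adjugate_csmul, adjugate_csmul, adj_adj, adj_adj, smul_smul] at h2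
        exact h2
      apply hprop ((a.det)⁻¹ * e)
      rw [Prod.smul_mk]
      rw [ha', hb', hiso]
  · rw [if_neg hC]
    have hbot : LinearMap.ker D0 = ⊥ := by
      rw [hkerD0, Submodule.eq_bot_iff]
      rintro z ⟨hz1, hz2⟩
      simp only [SetLike.mem_coe, LinearMap.mem_ker, sylv_apply, sub_eq_zero] at hz1 hz2
      have h1 : (p + p₂) * z = z * (q₁ + q₂) := by
        rw [add_mul, mul_add, hz1, hz2]
      rw [hsum_p, hsum_q, Matrix.smul_mul, one_mul, Matrix.mul_smul, mul_one] at h1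
      have h2 : (ta - tb) • z = 0 := by rw [sub_smul, h1, sub_self]
      rcases smul_eq_zero.mp h2 with h3 | h3
      · exact absurd (sub_eq_zero.mp h3) hC
      · exact h3
    rw [hbot]
    simp

lemma adj_of_mul_eq_one {l l' : M2} (hl' : l * l' = 1) : l'.adjugate = l'.det • l := by
  have h1 : l * (l' * l'.adjugate) = l * (l'.det • 1) := by rw [Matrix.mul_adjugate]
  rw [← mul_assoc, hl', one_mul, Matrix.mul_smul, mul_one] at h1
  exact h1

lemma self_of_mul_eq_one {l l' : M2} (hl' : l * l' = 1) : l' = l'.det • l.adjugate := by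
  have h1 := congrArg Matrix.adjugate (adj_of_mul_eq_one hl')
  rw [adj_adj, adjugate_csmul] at h1
  exact h1

lemma det_mul_det_of_mul_eq_one {l l' : M2} (hl' : l * l' = 1) : l.det * l'.det = 1 := by
  rw [← Matrix.det_mul, hl', Matrix.det_one]

lemma adj_mul_adj_of_mul_eq_one {h h' : M2} (hh' : h * h' = 1) :
    h'.adjugate * h.adjugate = 1 := by
  rw [← Matrix.adjugate_mul_distrib, hh', Matrix.adjugate_one]

lemma gact_id1 {g h k l h' l' : M2} (hh' : h * h' = 1) (hl' : l * l' = 1)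
    (hscal : k.det * h'.det = g.det * l'.det) (a b x y : M2) :
    (g*a*h).adjugate * (l'*x*g.adjugate).adjugate + (k*y*h'.adjugate).adjugate * (k*b*l)
      = (g.det * l'.det) • (h.adjugate * (a.adjugate * x.adjugate + y.adjugate * b) * l) := by
  have e1 : (g*a*h).adjugate = h.adjugate * a.adjugate * g.adjugate := by
    rw [Matrix.adjugate_mul_distrib, Matrix.adjugate_mul_distrib, mul_assoc]
  have e2 : (l'*x*g.adjugate).adjugate = g * (x.adjugate * l'.adjugate) := by
    rw [Matrix.adjugate_mul_distrib, Matrix.adjugate_mul_distrib, adj_adj]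
  have e3 : (k*y*h'.adjugate).adjugate = h' * (y.adjugate * k.adjugate) := by
    rw [Matrix.adjugate_mul_distrib, Matrix.adjugate_mul_distrib, adj_adj]
  rw [e1, e2, e3]
  simp only [← mul_assoc]
  rw [adjr' (h.adjugate * a.adjugate), Matrix.smul_mul, Matrix.smul_mul]
  rw [adj_of_mul_eq_one hl', Matrix.mul_smul, smul_smul]
  rw [adjr' (h' * y.adjugate), Matrix.smul_mul, Matrix.smul_mul]
  rw [self_of_mul_eq_one hh', Matrix.smul_mul, Matrix.smul_mul, Matrix.smul_mul,
    smul_smul, hscal]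
  rw [mul_add, add_mul, smul_add]
  simp only [← mul_assoc]

lemma gact_id2 {g h k l h' l' : M2} (hh' : h * h' = 1) (hl' : l * l' = 1) (a b x y : M2) :
    (k*b*l) * (l'*x*g.adjugate) + (k*y*h'.adjugate) * (g*a*h).adjugate
      = k * (b * x + y * a.adjugate) * g.adjugate := by
  have e1 : (g*a*h).adjugate = h.adjugate * (a.adjugate * g.adjugate) := by
    rw [Matrix.adjugate_mul_distrib, Matrix.adjugate_mul_distrib]
  rw [e1]
  simp only [← mul_assoc]
  have c1 : k * b * l * l' = k * b := by rw [mul_assoc, hl', mul_one]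
  have c2 : k * y * h'.adjugate * h.adjugate = k * y := by
    rw [mul_assoc, adj_mul_adj_of_mul_eq_one hh', mul_one]
  rw [c1, c2, mul_add, add_mul]
  simp only [← mul_assoc]

lemma det_adj (m : M2) : m.adjugate.det = m.det := by
  rw [Matrix.det_adjugate]
  norm_num

/-- the spinor transformation corresponding to `(a,b) ↦ (g a h, k b l)`. -/
noncomputable def gactMap (g h' k l' : M2) : (M2 × M2) →ₗ[ℂ] (M2 × M2) where
  toFun z := (l' * z.1 * g.adjugate, k * z.2 * h'.adjugate)
  map_add' z w := by
    simp only [Prod.fst_add, Prod.snd_add, mul_add, add_mul, Prod.mk_add_mk]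
  map_smul' c z := by
    simp only [Prod.smul_fst, Prod.smul_snd, Matrix.mul_smul, Matrix.smul_mul,
      RingHom.id_apply, Prod.smul_mk]

lemma gactMap_apply (g h' k l' x y : M2) :
    gactMap g h' k l' (x, y) = (l' * x * g.adjugate, k * y * h'.adjugate) := rfl

lemma ker_gact {g h k l h' l' : M2} (hg : g.det ≠ 0) (hh : h.det ≠ 0) (hk : k.det ≠ 0)
    (hl : l.det ≠ 0) (hh' : h * h' = 1) (hl' : l * l' = 1)
    (hdet : g.det * h.det = k.det * l.det) (a b : M2) :
    LinearMap.ker (cliffordMul (g*a*h) (k*b*l))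
      = Submodule.map (gactMap g h' k l') (LinearMap.ker (cliffordMul a b)) := by
  have hdh' : h.det * h'.det = 1 := det_mul_det_of_mul_eq_one hh'
  have hdl' : l.det * l'.det = 1 := det_mul_det_of_mul_eq_one hl'
  have hh'd : h'.det = (h.det)⁻¹ := by
    apply mul_left_cancel₀ hh
    rw [hdh', mul_inv_cancel₀ hh]
  have hl'd : l'.det = (l.det)⁻¹ := by
    apply mul_left_cancel₀ hl
    rw [hdl', mul_inv_cancel₀ hl]
  have hscal : k.det * h'.det = g.det * l'.det := by
    rw [hh'd, hl'd]
    field_simp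
    linear_combination - hdet
  have hl'l : l' * l = 1 := mul_eq_one_comm.mp hl'
  have hs : g.det * l'.det ≠ 0 := by
    rw [← hscal]
    intro h0
    rcases mul_eq_zero.mp h0 with h1 | h1
    · exact hk h1
    · rw [hh'd] at h1; exact hh (by simpa using h1)
  have hadjh : h.adjugate.det ≠ 0 := by rwa [det_adj]
  have hEval : ∀ x y : M2, cliffordMul (g*a*h) (k*b*l) (gactMap g h' k l' (x, y))
      = ((g.det * l'.det) • (h.adjugate * (a.adjugate * x.adjugate + y.adjugate * b) * l),
         k * (b * x + y * a.adjugate) * g.adjugate) := by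
    intro x y
    rw [gactMap_apply, cliffordMul_apply_s9, gact_id1 hh' hl' hscal, gact_id2 hh' hl']
  apply le_antisymm
  · rintro ⟨X, Y⟩ hW
    rw [LinearMap.mem_ker] at hW
    set x := l * X * ((g.det)⁻¹ • g) with hx
    set y := ((k.det)⁻¹ • k.adjugate) * Y * (h.det • h') with hy
    have hΦ : gactMap g h' k l' (x, y) = (X, Y) := by
      rw [gactMap_apply]
      refine Prod.ext ?_ ?_
      · show l' * (l * X * ((g.det)⁻¹ • g)) * g.adjugate = X
        simp only [Matrix.mul_smul, Matrix.smul_mul, ← mul_assoc]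
        rw [hl'l, one_mul, adjr X, smul_smul, inv_mul_cancel₀ hg, one_smul]
      · show k * (((k.det)⁻¹ • k.adjugate) * Y * (h.det • h')) * h'.adjugate = Y
        simp only [Matrix.mul_smul, Matrix.smul_mul, ← mul_assoc]
        rw [show k * k.adjugate * Y = k.det • Y by
          rw [Matrix.mul_adjugate, Matrix.smul_mul, one_mul]]
        rw [adjr (k.det • Y), smul_smul, smul_smul, smul_smul]
        rw [show h.det * (k.det)⁻¹ * h'.det * k.det = 1 by rw [hh'd]; field_simp]
        rw [one_smul]
    refine ⟨(x, y), ?_, hΦ⟩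
    rw [SetLike.mem_coe, LinearMap.mem_ker]
    have h0 : cliffordMul (g*a*h) (k*b*l) (gactMap g h' k l' (x, y)) = 0 := by
      rw [hΦ]; exact hW
    rw [hEval x y, Prod.mk_eq_zero] at h0
    obtain ⟨h1, h2⟩ := h0
    have hM1 : a.adjugate * x.adjugate + y.adjugate * b = 0 := by
      have h1' : h.adjugate * (a.adjugate * x.adjugate + y.adjugate * b) * l = 0 :=
        (smul_eq_zero.mp h1).resolve_left hs
      have h1'' : h.adjugate * ((a.adjugate * x.adjugate + y.adjugate * b) * l)
          = h.adjugate * 0 := by rw [mul_zero, ← mul_assoc]; exact h1'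
      have h1''' := left_cancel hadjh h1''
      have h1'''' : (a.adjugate * x.adjugate + y.adjugate * b) * l = 0 * l := by
        rw [zero_mul]; exact h1'''
      exact right_cancel hl h1''''
    have hM2 : b * x + y * a.adjugate = 0 := by
      have h2'' : k * ((b * x + y * a.adjugate) * g.adjugate) = k * 0 := by
        rw [mul_zero, ← mul_assoc]; exact h2
      have h2''' := left_cancel hk h2''
      have h2'''' : (b * x + y * a.adjugate) * g.adjugate = 0 * g.adjugate := by
        rw [zero_mul]; exact h2'''
      exact right_cancel (by rwa [det_adj] : g.adjugate.det ≠ 0) h2''''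
    rw [cliffordMul_apply_s9, Prod.mk_eq_zero]
    exact ⟨hM1, hM2⟩
  · rintro w ⟨⟨x, y⟩, hxy, rfl⟩
    rw [SetLike.mem_coe, LinearMap.mem_ker] at hxy
    rw [LinearMap.mem_ker, hEval x y]
    rw [cliffordMul_apply_s9, Prod.mk_eq_zero] at hxy
    rw [hxy.1, hxy.2, Prod.mk_eq_zero]
    constructor
    · rw [mul_zero, zero_mul, smul_zero]
    · rw [mul_zero, zero_mul]

/-- the vector-representation transformation given by composing the reflections in
`(1,0)` and `(1, 2·1)` : `(a,b) ↦ (-adj a + s•1, b + 2s•1)`, `s = -(tr a + 2 tr b)/3`. -/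
noncomputable def triT : (M2 × M2) →ₗ[ℂ] (M2 × M2) where
  toFun w := (-(w.1.adjugate) + (-(w.1.trace + 2*w.2.trace)/3) • 1,
              w.2 + (2 * (-(w.1.trace + 2*w.2.trace)/3)) • 1)
  map_add' z w := by
    refine Prod.ext ?_ ?_ <;> ext i j <;> fin_cases i <;> fin_cases j <;>
      simp [Matrix.adjugate_fin_two, Matrix.trace_fin_two, Matrix.one_apply,
        Matrix.add_apply, Matrix.smul_apply] <;> ring
  map_smul' c z := by
    refine Prod.ext ?_ ?_ <;> ext i j <;> fin_cases i <;> fin_cases j <;>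
      simp [Matrix.adjugate_fin_two, Matrix.trace_fin_two, Matrix.one_apply,
        Matrix.add_apply, Matrix.smul_apply] <;> ring

lemma triT_apply (a b : M2) : triT (a, b)
    = (-(a.adjugate) + (-(a.trace + 2*b.trace)/3) • 1,
       b + (2 * (-(a.trace + 2*b.trace)/3)) • 1) := rfl

/-- the corresponding half-spinor transformation on `S⁺`. -/
noncomputable def triA : (M2 × M2) →ₗ[ℂ] (M2 × M2) where
  toFun z := (z.1 - (2:ℂ) • z.2, z.2 - (2:ℂ) • z.1)
  map_add' z w := by
    refine Prod.ext ?_ ?_ <;> simp [Prod.fst_add, Prod.snd_add, smul_add] <;> abel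
  map_smul' c z := by
    refine Prod.ext ?_ ?_ <;> simp [smul_sub, smul_smul, mul_comm]

set_option maxHeartbeats 3200000 in
lemma tact_id (a b x y : M2) :
    cliffordMul (triT (a, b)).1 (triT (a, b)).2 (triA (x, y))
    = ((cliffordMul a b (x, y)).1 + (2:ℂ) • ((cliffordMul a b (x, y)).2).adjugate,
       (2:ℂ) • ((cliffordMul a b (x, y)).1).adjugate + (cliffordMul a b (x, y)).2) := by
  rw [triT_apply, show triA (x, y) = (x - (2:ℂ) • y, y - (2:ℂ) • x) from rfl]
  rw [cliffordMul_apply_s9, cliffordMul_apply_s9]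
  refine Prod.ext ?_ ?_ <;> ext i j <;> fin_cases i <;> fin_cases j <;>
    simp [Matrix.adjugate_fin_two, Matrix.trace_fin_two, Matrix.one_apply,
      Matrix.mul_apply, Fin.sum_univ_two, Matrix.add_apply, Matrix.smul_apply,
      Matrix.vecMul, Matrix.vecHead, Matrix.vecTail, dotProduct,
      Matrix.sub_apply] <;> ring

lemma triA_apply (x y : M2) : triA (x, y) = (x - (2:ℂ) • y, y - (2:ℂ) • x) := rfl

lemma ker_tact (a b : M2) :
    LinearMap.ker (cliffordMul (triT (a,b)).1 (triT (a,b)).2)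
      = Submodule.map triA (LinearMap.ker (cliffordMul a b)) := by
  apply le_antisymm
  · rintro ⟨X, Y⟩ hW
    rw [LinearMap.mem_ker] at hW
    set x := (-(1:ℂ)/3) • (X + (2:ℂ) • Y) with hxd
    set y := (-(1:ℂ)/3) • (Y + (2:ℂ) • X) with hyd
    have hz : triA (x, y) = (X, Y) := by
      rw [triA_apply]
      refine Prod.ext ?_ ?_
      · show (-(1:ℂ)/3) • (X + (2:ℂ) • Y) - (2:ℂ) • ((-(1:ℂ)/3) • (Y + (2:ℂ) • X)) = X
        module
      · show (-(1:ℂ)/3) • (Y + (2:ℂ) • X) - (2:ℂ) • ((-(1:ℂ)/3) • (X + (2:ℂ) • Y)) = Y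
        module
    refine ⟨(x, y), ?_, hz⟩
    rw [SetLike.mem_coe, LinearMap.mem_ker]
    have h0 : cliffordMul (triT (a,b)).1 (triT (a,b)).2 (triA (x, y)) = 0 := by
      rw [hz]; exact hW
    rw [tact_id] at h0
    rw [Prod.mk_eq_zero] at h0
    obtain ⟨h1, h2⟩ := h0
    have hM2 : (cliffordMul a b (x, y)).2 = -((2:ℂ) • ((cliffordMul a b (x, y)).1).adjugate) :=
      eq_neg_of_add_eq_zero_right h2
    rw [hM2, ← neg_smul, adjugate_csmul, adj_adj] at h1
    have h3 : (cliffordMul a b (x, y)).1 + (2:ℂ) • ((-2:ℂ) • (cliffordMul a b (x, y)).1)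
        = (-3:ℂ) • (cliffordMul a b (x, y)).1 := by module
    rw [h3] at h1
    have hM1 : (cliffordMul a b (x, y)).1 = 0 := by
      rcases smul_eq_zero.mp h1 with hc | hc
      · norm_num at hc
      · exact hc
    have hM2' : (cliffordMul a b (x, y)).2 = 0 := by
      rw [hM2, hM1]
      simp
    exact Prod.ext hM1 hM2'
  · rintro w ⟨⟨x, y⟩, hxy, rfl⟩
    rw [SetLike.mem_coe, LinearMap.mem_ker] at hxy
    rw [LinearMap.mem_ker, tact_id, hxy]
    simp

lemma triT_det (a b : M2) :
    (triT (a,b)).1.det - (triT (a,b)).2.det = a.det - b.det := by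
  rw [triT_apply]
  simp only [Matrix.det_fin_two, Matrix.adjugate_fin_two, Matrix.trace_fin_two,
    Matrix.add_apply, Matrix.neg_apply, Matrix.smul_apply, Matrix.one_apply, Matrix.of_apply,
    Matrix.cons_val', Matrix.cons_val_zero, Matrix.cons_val_one, Matrix.head_cons,
    Matrix.head_fin_const, Matrix.empty_val', Matrix.cons_val_fin_one]
  norm_num
  ring

lemma triT_pair (a b a' b' : M2) :
    ((triT (a,b)).1 * ((triT (a',b')).1).adjugate).trace
      - ((triT (a,b)).2 * ((triT (a',b')).2).adjugate).trace
    = (a * a'.adjugate).trace - (b * b'.adjugate).trace := by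
  rw [triT_apply, triT_apply]
  simp only [Matrix.trace_fin_two, Matrix.mul_apply, Fin.sum_univ_two,
    Matrix.adjugate_fin_two, Matrix.add_apply, Matrix.neg_apply, Matrix.smul_apply,
    Matrix.one_apply, Matrix.of_apply, Matrix.cons_val', Matrix.cons_val_zero,
    Matrix.cons_val_one, Matrix.head_cons, Matrix.empty_val', Matrix.cons_val_fin_one]
  norm_num
  ring

lemma triT_inj {w : M2 × M2} (h : triT w = 0) : w = 0 := by
  obtain ⟨a, b⟩ := w
  rw [triT_apply, Prod.mk_eq_zero] at h
  obtain ⟨h1, h2⟩ := h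
  have e : ∀ i j : Fin 2, (-(a.adjugate) + (-(a.trace + 2*b.trace)/3) • (1:M2)) i j = 0 :=
    fun i j => by rw [h1]; rfl
  have f : ∀ i j : Fin 2, (b + (2 * (-(a.trace + 2*b.trace)/3)) • (1:M2)) i j = 0 :=
    fun i j => by rw [h2]; rfl
  have e00 := e 0 0; have e01 := e 0 1; have e10 := e 1 0; have e11 := e 1 1
  have f00 := f 0 0; have f01 := f 0 1; have f10 := f 1 0; have f11 := f 1 1
  simp only [Matrix.adjugate_fin_two, Matrix.trace_fin_two, Matrix.add_apply,
    Matrix.neg_apply, Matrix.smul_apply, Matrix.one_apply, Matrix.of_apply,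
    Matrix.cons_val', Matrix.cons_val_zero, Matrix.cons_val_one, Matrix.head_cons,
    Matrix.empty_val', Matrix.cons_val_fin_one, smul_eq_mul, mul_one, mul_zero,
    if_true, if_false, Fin.isValue, one_ne_zero, zero_ne_one, ite_true, ite_false,
    Matrix.vecHead, Matrix.vecTail,
    add_zero] at e00 e01 e10 e11 f00 f01 f10 f11
  rw [Prod.mk_eq_zero]
  constructor <;> ext i j <;> fin_cases i <;> fin_cases j <;>
    simp only [Matrix.zero_apply, Fin.isValue, Fin.mk_zero, Fin.mk_one]
  · linear_combination (-1/3 : ℂ) * e00 + (-4/3 : ℂ) * e11 + (2/3 : ℂ) * f00 + (2/3 : ℂ) * f11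
  · linear_combination e01
  · linear_combination e10
  · linear_combination (-4/3 : ℂ) * e00 + (-1/3 : ℂ) * e11 + (2/3 : ℂ) * f00 + (2/3 : ℂ) * f11
  · linear_combination (2/3 : ℂ) * e00 + (2/3 : ℂ) * e11 + (-1/3 : ℂ) * f00 + (-4/3 : ℂ) * f11
  · linear_combination f01
  · linear_combination f10
  · linear_combination (2/3 : ℂ) * e00 + (2/3 : ℂ) * e11 + (-4/3 : ℂ) * f00 + (-1/3 : ℂ) * f11

lemma finrank_inf_map {Φ : (M2 × M2) →ₗ[ℂ] (M2 × M2)} (hinj : Function.Injective Φ)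
    (K1 K2 : Submodule ℂ (M2 × M2)) :
    Module.finrank ℂ ↥(Submodule.map Φ K1 ⊓ Submodule.map Φ K2)
      = Module.finrank ℂ ↥(K1 ⊓ K2) := by
  rw [← Submodule.map_inf Φ hinj]
  exact (LinearEquiv.finrank_eq (Submodule.equivMapOfInjective Φ hinj _)).symm

lemma gact_pairing (g h : M2) (a a' : M2) :
    ((g*a*h) * ((g*a'*h)).adjugate).trace = (g.det * h.det) * (a * a'.adjugate).trace := by
  rw [Matrix.adjugate_mul_distrib, Matrix.adjugate_mul_distrib]
  have e : (g*a*h) * (h.adjugate * (a'.adjugate * g.adjugate))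
      = h.det • (g * (a * a'.adjugate) * g.adjugate) := by
    simp only [← mul_assoc]
    rw [adjr (g*a), Matrix.smul_mul, Matrix.smul_mul]
  rw [e, Matrix.trace_smul,
    Matrix.trace_mul_comm (g * (a * a'.adjugate)) g.adjugate, ← mul_assoc,
    Matrix.adjugate_mul, Matrix.smul_mul, one_mul, Matrix.trace_smul]
  simp [smul_eq_mul]
  ring

lemma transfer_gact (g h k l : M2) (hg : g.det ≠ 0) (hh : h.det ≠ 0) (hk : k.det ≠ 0)
    (hl : l.det ≠ 0) (hdet : g.det * h.det = k.det * l.det) (a b a' b' : M2)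
    (H : Module.finrank ℂ ↥(LinearMap.ker (cliffordMul (g*a*h) (k*b*l))
          ⊓ LinearMap.ker (cliffordMul (g*a'*h) (k*b'*l)))
      = if ((g*a*h) * ((g*a'*h)).adjugate).trace = ((k*b*l) * ((k*b'*l)).adjugate).trace
          then 2 else 0) :
    Module.finrank ℂ ↥(LinearMap.ker (cliffordMul a b) ⊓ LinearMap.ker (cliffordMul a' b'))
      = if (a * a'.adjugate).trace = (b * b'.adjugate).trace then 2 else 0 := by
  have hhu : IsUnit h.det := isUnit_iff_ne_zero.mpr hh
  have hlu : IsUnit l.det := isUnit_iff_ne_zero.mpr hl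
  have hh' : h * h⁻¹ = 1 := Matrix.mul_nonsing_inv h hhu
  have hl' : l * l⁻¹ = 1 := Matrix.mul_nonsing_inv l hlu
  have hΦinj : Function.Injective (gactMap g h⁻¹ k l⁻¹) := by
    intro z w hzw
    have hdl' : l.det * (l⁻¹).det = 1 := det_mul_det_of_mul_eq_one hl'
    have hdh' : h.det * (h⁻¹).det = 1 := det_mul_det_of_mul_eq_one hh'
    have hdl'0 : (l⁻¹).det ≠ 0 := by intro h0; rw [h0, mul_zero] at hdl'; simp at hdl'
    have hgadj : g.adjugate.det ≠ 0 := by rwa [det_adj]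
    have hh'adj : (h⁻¹).adjugate.det ≠ 0 := by
      rw [det_adj]; intro h0; rw [h0, mul_zero] at hdh'; simp at hdh'
    have h1 := congrArg Prod.fst hzw
    have h2 := congrArg Prod.snd hzw
    simp only [gactMap, LinearMap.coe_mk, AddHom.coe_mk] at h1 h2
    refine Prod.ext ?_ ?_
    · exact left_cancel hdl'0 (right_cancel hgadj h1)
    · exact left_cancel hk (right_cancel hh'adj h2)
  rw [ker_gact hg hh hk hl hh' hl' hdet a b, ker_gact hg hh hk hl hh' hl' hdet a' b',
    finrank_inf_map hΦinj] at H
  rw [H]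
  have hs : g.det * h.det ≠ 0 := mul_ne_zero hg hh
  have hcond : (((g*a*h) * ((g*a'*h)).adjugate).trace = ((k*b*l) * ((k*b'*l)).adjugate).trace)
      ↔ ((a * a'.adjugate).trace = (b * b'.adjugate).trace) := by
    rw [gact_pairing, gact_pairing, hdet]
    exact mul_right_inj' (by rwa [← hdet])
  exact if_congr hcond rfl rfl

lemma triA_inj : Function.Injective (triA : (M2 × M2) →ₗ[ℂ] (M2 × M2)) := by
  rw [← LinearMap.ker_eq_bot, Submodule.eq_bot_iff]
  rintro ⟨x, y⟩ hz
  rw [LinearMap.mem_ker, triA_apply, Prod.mk_eq_zero] at hz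
  obtain ⟨h1, h2⟩ := hz
  rw [sub_eq_zero] at h1 h2
  rw [h2, smul_smul] at h1
  have h3 : ((2*2 : ℂ) - 1) • x = 0 := by rw [sub_smul, one_smul, ← h1, sub_self]
  have hx : x = 0 := by
    rcases smul_eq_zero.mp h3 with hc | hc
    · norm_num at hc
    · exact hc
  have hy : y = 0 := by rw [h2, hx, smul_zero]
  rw [Prod.mk_eq_zero]
  exact ⟨hx, hy⟩

lemma transfer_tact (a b a' b' : M2)
    (H : Module.finrank ℂ ↥(LinearMap.ker (cliffordMul (triT (a,b)).1 (triT (a,b)).2)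
          ⊓ LinearMap.ker (cliffordMul (triT (a',b')).1 (triT (a',b')).2))
      = if ((triT (a,b)).1 * ((triT (a',b')).1).adjugate).trace
          = ((triT (a,b)).2 * ((triT (a',b')).2).adjugate).trace then 2 else 0) :
    Module.finrank ℂ ↥(LinearMap.ker (cliffordMul a b) ⊓ LinearMap.ker (cliffordMul a' b'))
      = if (a * a'.adjugate).trace = (b * b'.adjugate).trace then 2 else 0 := by
  rw [ker_tact a b, ker_tact a' b', finrank_inf_map triA_inj] at H
  rw [H]
  refine if_congr ?_ rfl rfl
  constructor
  · intro hc
    have := triT_pair a b a' b'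
    rw [hc, sub_self] at this
    exact sub_eq_zero.mp this.symm
  · intro hc
    have := triT_pair a b a' b'
    rw [hc, sub_self] at this
    exact sub_eq_zero.mp this

lemma exists_trace_ne {m : M2} (hm : m ≠ 0) :
    ∃ u : M2, u.det = 1 ∧ (m * u).trace ≠ 0 := by
  by_cases ht : m.trace ≠ 0
  · exact ⟨1, Matrix.det_one, by simpa using ht⟩
  push_neg at ht
  rw [Matrix.trace_fin_two] at ht
  by_cases h01 : m 0 1 ≠ 0
  · refine ⟨!![1,0;1,1], by simp [Matrix.det_fin_two_of], ?_⟩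
    rw [Matrix.trace_fin_two]
    simp only [Matrix.mul_apply, Fin.sum_univ_two, Matrix.cons_val', Matrix.cons_val_zero,
      Matrix.cons_val_one, Matrix.head_cons, Matrix.empty_val', Matrix.cons_val_fin_one,
      Matrix.head_fin_const, Matrix.of_apply]
    intro h0
    exact h01 (by linear_combination h0 - ht)
  push_neg at h01
  by_cases h10 : m 1 0 ≠ 0
  · refine ⟨!![1,1;0,1], by simp [Matrix.det_fin_two_of], ?_⟩
    rw [Matrix.trace_fin_two]
    simp only [Matrix.mul_apply, Fin.sum_univ_two, Matrix.cons_val', Matrix.cons_val_zero,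
      Matrix.cons_val_one, Matrix.head_cons, Matrix.empty_val', Matrix.cons_val_fin_one,
      Matrix.head_fin_const, Matrix.of_apply]
    intro h0
    exact h10 (by linear_combination h0 - ht)
  push_neg at h10
  have h00 : m 0 0 ≠ 0 := by
    intro h0
    apply hm
    ext i j
    fin_cases i <;> fin_cases j <;>
      simp only [Matrix.zero_apply, Fin.mk_zero, Fin.mk_one, Fin.isValue]
    · exact h0
    · exact h01
    · exact h10
    · linear_combination ht - h0
  refine ⟨!![1,1;1,2], by simp [Matrix.det_fin_two_of]; norm_num, ?_⟩
  rw [Matrix.trace_fin_two]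
  simp only [Matrix.mul_apply, Fin.sum_univ_two, Matrix.cons_val', Matrix.cons_val_zero,
    Matrix.cons_val_one, Matrix.head_cons, Matrix.empty_val', Matrix.cons_val_fin_one,
    Matrix.head_fin_const, Matrix.of_apply]
  intro h0
  exact h00 (by linear_combination 2*ht - h0 + h01 + h10)

lemma exists_eps (α β : ℂ) (hα : α ≠ 0) :
    ∃ ε : ℂ, ε * ε = 1 ∧ α + 2*(ε*β) ≠ 0 ∧ 2*α + ε*β ≠ 0 := by
  by_cases h1 : α + 2*β ≠ 0 ∧ 2*α + β ≠ 0
  · exact ⟨1, by ring, by intro h0; exact h1.1 (by linear_combination h0),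
      by intro h0; exact h1.2 (by linear_combination h0)⟩
  · rw [not_and_or, not_not, not_not] at h1
    refine ⟨-1, by ring, ?_, ?_⟩
    · intro h0
      rcases h1 with hc | hc
      · exact hα (by linear_combination (h0 + hc)/2)
      · exact hα (by linear_combination (h0 + 2*hc)/5)
    · intro h0
      rcases h1 with hc | hc
      · exact hα (by linear_combination (2*h0 + hc)/5)
      · exact hα (by linear_combination (h0 + hc)/4)

lemma det_triT1 (a b : M2) :
    (triT (a,b)).1.det
      = (-(a.trace + 2*b.trace)/3)^2 - (-(a.trace + 2*b.trace)/3) * a.trace + a.det := by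
  rw [triT_apply]
  simp only [Matrix.det_fin_two, Matrix.adjugate_fin_two, Matrix.trace_fin_two,
    Matrix.add_apply, Matrix.neg_apply, Matrix.smul_apply, Matrix.one_apply, Matrix.of_apply,
    Matrix.cons_val', Matrix.cons_val_zero, Matrix.cons_val_one, Matrix.head_cons,
    Matrix.head_fin_const, Matrix.empty_val', Matrix.cons_val_fin_one]
  norm_num
  ring

/-- Intersection pattern of the isotropic 4-planes of one ruling of the 6-dimensional
quadric: for nonzero isotropic vectors `(a,b)` and `(a′,b′)` of `W` that are not complex
scalar multiples of each other, `ker m_{a,b} ∩ ker m_{a′,b′}` has dimension 2 if the two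
vectors are orthogonal for the polar form of `q` (i.e. `tr(a·adj a′) = tr(b·adj b′)`),
and dimension 0 otherwise. -/
theorem finrank_ker_inter_ker_cliffordMul (a b a' b' : M2)
    (hiso : a.det = b.det) (hiso' : a'.det = b'.det)
    (hne : (a, b) ≠ (0, 0)) (hne' : (a', b') ≠ (0, 0))
    (hprop : ∀ c : ℂ, (a', b') ≠ c • ((a, b) : M2 × M2)) :
    Module.finrank ℂ
        ↥(LinearMap.ker (cliffordMul a b) ⊓ LinearMap.ker (cliffordMul a' b'))
      = if (a * a'.adjugate).trace = (b * b'.adjugate).trace then 2 else 0 := by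
  by_cases hdeta : a.det = 0
  · have hdetb : b.det = 0 := by rw [← hiso]; exact hdeta
    obtain ⟨g, h, k, l, hg, hh, hk, hl, hdet, htr1, htr2⟩ :
        ∃ g h k l : M2, g.det ≠ 0 ∧ h.det ≠ 0 ∧ k.det ≠ 0 ∧ l.det ≠ 0
          ∧ g.det * h.det = k.det * l.det
          ∧ (g*a*h).trace + 2*(k*b*l).trace ≠ 0
          ∧ 2*(g*a*h).trace + (k*b*l).trace ≠ 0 := by
      by_cases haz : a = 0
      · have hbz : b ≠ 0 := fun hb0 => hne (by rw [haz, hb0])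
        obtain ⟨u, hu1, hu2⟩ := exists_trace_ne hbz
        refine ⟨1, 1, 1, u, by simp, by simp, by simp, by rw [hu1]; exact one_ne_zero,
          by rw [hu1]; simp, ?_, ?_⟩
        · rw [haz]
          simp only [mul_zero, zero_mul, one_mul, Matrix.trace_zero, zero_add]
          intro h0
          exact hu2 (by linear_combination h0/2)
        · rw [haz]
          simp only [mul_zero, zero_mul, one_mul, Matrix.trace_zero, add_zero, mul_zero,
            zero_add]
          simpa using hu2
      · obtain ⟨u, hu1, hu2⟩ := exists_trace_ne haz
        obtain ⟨ε, hε, hc1, hc2⟩ := exists_eps (a*u).trace b.trace hu2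
        have hεne : ε ≠ 0 := by
          intro h0; rw [h0, zero_mul] at hε; exact zero_ne_one hε
        refine ⟨1, u, ε • 1, 1, by simp, by rw [hu1]; exact one_ne_zero, ?_, by simp, ?_, ?_, ?_⟩
        · rw [Matrix.det_smul, Matrix.det_one]
          simp only [Fintype.card_fin, mul_one]
          intro h0
          exact hεne (pow_eq_zero_iff (by norm_num) |>.mp h0)
        · simp only [Matrix.det_smul, Matrix.det_one, Fintype.card_fin, hu1, one_mul, mul_one]
          rw [pow_two, hε]
        · rw [one_mul, Matrix.smul_mul, Matrix.smul_mul, Matrix.trace_smul, one_mul, mul_one]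
          simpa [smul_eq_mul] using hc1
        · rw [one_mul, Matrix.smul_mul, Matrix.smul_mul, Matrix.trace_smul, one_mul, mul_one]
          simpa [smul_eq_mul] using hc2
    refine transfer_gact g h k l hg hh hk hl hdet a b a' b' ?_
    refine transfer_tact (g*a*h) (k*b*l) (g*a'*h) (k*b'*l) ?_
    have hda1 : (g*a*h).det = 0 := by
      rw [Matrix.det_mul, Matrix.det_mul, hdeta]; ring
    have hdb1 : (k*b*l).det = 0 := by
      rw [Matrix.det_mul, Matrix.det_mul, hdetb]; ring
    have hiso1 : (g*a*h).det = (k*b*l).det := by rw [hda1, hdb1]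
    have hiso1' : (g*a'*h).det = (k*b'*l).det := by
      rw [Matrix.det_mul, Matrix.det_mul, Matrix.det_mul, Matrix.det_mul, hiso']
      linear_combination b'.det * hdet
    apply core_invertible
    · -- det of first transformed component ≠ 0
      rw [det_triT1, hda1]
      set s : ℂ := -((g*a*h).trace + 2*(k*b*l).trace)/3 with hs
      have hs0 : s ≠ 0 := by
        intro h0; apply htr1; rw [hs] at h0; linear_combination (-3 : ℂ) * h0
      have hs1 : s - (g*a*h).trace ≠ 0 := by
        intro h0; apply htr2; rw [hs] at h0
        linear_combination (-3/2 : ℂ) * h0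
      intro h0
      have : s * (s - (g*a*h).trace) = 0 := by linear_combination h0
      rcases mul_eq_zero.mp this with hc | hc
      · exact hs0 hc
      · exact hs1 hc
    · -- isotropy of transformed pair
      have := triT_det (g*a*h) (k*b*l)
      rw [hiso1, sub_self] at this
      exact sub_eq_zero.mp this
    · have := triT_det (g*a'*h) (k*b'*l)
      rw [hiso1', sub_self] at this
      exact sub_eq_zero.mp this
    · -- non-proportionality of transformed pair
      intro c hc
      have hc' : triT (g*a'*h, k*b'*l) = c • triT (g*a*h, k*b*l) := by
        have e1 : triT (g*a'*h, k*b'*l)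
            = ((triT (g*a'*h, k*b'*l)).1, (triT (g*a'*h, k*b'*l)).2) := rfl
        have e2 : triT (g*a*h, k*b*l)
            = ((triT (g*a*h, k*b*l)).1, (triT (g*a*h, k*b*l)).2) := rfl
        rw [e1, e2]
        exact hc
      have h0 : triT ((g*a'*h, k*b'*l) - c • (g*a*h, k*b*l)) = 0 := by
        rw [map_sub, _root_.map_smul, hc', sub_self]
      have h1 := triT_inj h0
      rw [sub_eq_zero] at h1
      have ha1 : g*a'*h = c • (g*a*h) := congrArg Prod.fst h1
      have hb1 : k*b'*l = c • (k*b*l) := congrArg Prod.snd h1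
      apply hprop c
      have haa : a' = c • a := by
        have e : g * (a' * h) = g * ((c • a) * h) := by
          simp only [← mul_assoc]
          rw [Matrix.mul_smul, Matrix.smul_mul]
          exact ha1
        exact right_cancel hh (left_cancel hg e)
      have hbb : b' = c • b := by
        have e : k * (b' * l) = k * ((c • b) * l) := by
          simp only [← mul_assoc]
          rw [Matrix.mul_smul, Matrix.smul_mul]
          exact hb1
        exact right_cancel hl (left_cancel hk e)
      rw [haa, hbb]
      rfl
  · exact core_invertible a b a' b' hdeta hiso hiso' hprop
end
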